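/- arXiv:1005.2036 — 7 statements merged into one kernel-verified Lean document; each statement's English description precedes it below -/
import Mathlib

section
/- Let X be a deterministic Markov family on ℝ. If a path of X becomes locally constant, it remains constant forever: if for some x ∈ ℝ and some 0 ≤ t₀ < t₁ the function t ↦ X x t is constant on the interval [t₀, t₁], then X x t = X x t₀ for every t ≥ t₀. -/
/-- If a path of a deterministic Markov family on `ℝ` becomes locally constant,
it remains constant forever. -/
theorem deterministic_markov_locally_constant
    (X : ℝ → ℝ → ℝ)
    (h0 : ∀ x : ℝ, X x 0 = x)
    (hflow : ∀ x y s t : ℝ, 0 ≤ s → 0 ≤ t → X x s = X y t →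
      ∀ h : ℝ, 0 ≤ h → X x (s + h) = X y (t + h))
    (x t₀ t₁ : ℝ) (ht₀ : 0 ≤ t₀) (ht : t₀ < t₁)
    (hconst : ∀ t ∈ Set.Icc t₀ t₁, X x t = X x t₀) :
    ∀ t : ℝ, t₀ ≤ t → X x t = X x t₀ := by
  set δ := t₁ - t₀ with hδ
  have hδpos : 0 < δ := sub_pos.mpr ht
  have key : ∀ n : ℕ, ∀ t : ℝ, t₀ ≤ t → t ≤ t₀ + n * δ → X x t = X x t₀ := by
    intro n
    induction n with
    | zero =>
      intro t h1 h2
      simp at h2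
      have : t = t₀ := le_antisymm h2 h1
      rw [this]
    | succ n ih =>
      intro t h1 h2
      by_cases hc : t ≤ t₁
      · exact hconst t ⟨h1, hc⟩
      · push_neg at hc
        have ht1 : X x t₀ = X x t₁ :=
          (hconst t₁ ⟨ht.le, le_refl _⟩).symm
        have hh : 0 ≤ t - t₁ := sub_nonneg.mpr hc.le
        have := hflow x x t₀ t₁ ht₀ (ht₀.trans ht.le) ht1 (t - t₁) hh
        have e1 : t₁ + (t - t₁) = t := by ring
        have e2 : t₀ + (t - t₁) = t - δ := by rw [hδ]; ring
        rw [e1, e2] at this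
        have h1' : t₀ ≤ t - δ := by
          have : t₀ + δ = t₁ := by rw [hδ]; ring
          linarith
        have h2' : t - δ ≤ t₀ + n * δ := by
          push_cast at h2 ⊢; linarith
        rw [← this]
        exact ih (t - δ) h1' h2'
  intro t htt
  obtain ⟨n, hn⟩ := Archimedean.arch (t - t₀) hδpos
  refine key n t htt ?_
  simp [nsmul_eq_mul] at hn
  linarith
end

section
/- Let X be a one-dimensional deterministic Hunt process, i.e. a deterministic Markov family on ℝ all of whose paths t ↦ X x t are continuous on [0,∞). Then for every x ∈ ℝ there exists t₀ ∈ [0,∞] such that t ↦ X x t is strictly monotone (either strictly increasing or strictly decreasing) on [0, t₀) and constant on [t₀, ∞), i.e. X x t = X x t₀ for all t ≥ t₀ whenever t₀ < ∞. -/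
open scoped ENNReal

/-- A continuous injective function on an ord-connected set of reals is
strictly monotone or strictly antitone. -/
lemma aux_mono_or_anti {f : ℝ → ℝ} {s : Set ℝ} (hs : s.OrdConnected)
    (hc : ContinuousOn f s) (hi : Set.InjOn f s) :
    StrictMonoOn f s ∨ StrictAntiOn f s := by
  by_cases h : StrictMonoOn f s
  · exact Or.inl h
  right
  unfold StrictMonoOn at h
  push_neg at h
  obtain ⟨u, hu, v, hv, huv, hvu⟩ := h
  have hvu' : f v < f u := hvu.lt_of_ne fun e => huv.ne' (hi hv hu e)
  intro a ha b hb hab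
  set A := min a u with hA
  set B := max b v with hB
  have hAs : A ∈ s := by rcases min_choice a u with h' | h' <;> rw [hA, h'] <;> assumption
  have hBs : B ∈ s := by rcases max_choice b v with h' | h' <;> rw [hB, h'] <;> assumption
  have hsub : Set.Icc A B ⊆ s := hs.out hAs hBs
  have hAB : A ≤ B := le_trans (min_le_left a u) (le_trans hab.le (le_max_left b v))
  have hma : a ∈ Set.Icc A B := ⟨min_le_left a u, le_trans hab.le (le_max_left b v)⟩
  have hmb : b ∈ Set.Icc A B := ⟨le_trans (min_le_left a u) hab.le, le_max_left b v⟩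
  have hmu : u ∈ Set.Icc A B := ⟨min_le_right a u, le_trans huv.le (le_max_right b v)⟩
  have hmv : v ∈ Set.Icc A B := ⟨le_trans (min_le_right a u) huv.le, le_max_right b v⟩
  rcases ContinuousOn.strictMonoOn_of_injOn_Icc' hAB (hc.mono hsub) (hi.mono hsub) with hm | ha'
  · exact absurd (hm hmu hmv huv) (not_lt.mpr hvu'.le)
  · exact ha' hma hmb hab

/-- A continuous path of a semiflow that revisits a value is constant. -/
lemma aux_periodic_const {g : ℝ → ℝ} (gc : ContinuousOn g (Set.Ici 0))
    (gflow : ∀ a b : ℝ, 0 ≤ a → 0 ≤ b → g a = g b → ∀ h : ℝ, 0 ≤ h → g (a + h) = g (b + h))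
    {p : ℝ} (hp : 0 < p) (hgp : g 0 = g p) :
    ∀ t : ℝ, 0 ≤ t → g t = g 0 := by
  set P : Set ℝ := {h | 0 ≤ h ∧ ∀ t, 0 ≤ t → g (t + h) = g t} with hPdef
  have hPp : p ∈ P := by
    refine ⟨hp.le, fun t ht => ?_⟩
    have := gflow 0 p le_rfl hp.le hgp t ht
    rw [zero_add, add_comm p t] at this
    exact this.symm
  have hmul : ∀ q ∈ P, ∀ k : ℕ, ∀ t : ℝ, 0 ≤ t → g (t + k * q) = g t := by
    intro q hq k
    induction k with
    | zero => intro t ht; simp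
    | succ n ih =>
      intro t ht
      have h1 : g (t + q + n * q) = g (t + q) := ih (t + q) (by linarith [hq.1])
      have h2 : g (t + q) = g t := hq.2 t ht
      have e : t + ((n : ℕ) + 1 : ℕ) * q = t + q + (n : ℕ) * q := by push_cast; ring
      rw [e, h1, h2]
  have gap : ∀ a b : ℝ, 0 ≤ a → a ≤ b → g a = g b → b - a ∈ P := by
    intro a b ha hab he
    refine ⟨by linarith, fun t ht => ?_⟩
    obtain ⟨k, hk⟩ := exists_nat_gt ((a - t) / p)
    have hk' : a - t < k * p := by
      have := (div_lt_iff₀ hp).mp hk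
      linarith
    have hh : (0:ℝ) ≤ t + k * p - a := by linarith
    have key := gflow a b ha (ha.trans hab) he (t + k * p - a) hh
    rw [show a + (t + k * p - a) = t + k * p by ring,
        show b + (t + k * p - a) = t + (b - a) + k * p by ring] at key
    have l1 : g (t + k * p) = g t := hmul p hPp k t ht
    have l2 : g (t + (b - a) + k * p) = g (t + (b - a)) := hmul p hPp k _ (by linarith)
    rw [l1, l2] at key
    exact key.symm
  intro t0 ht0
  by_contra hne
  set Q : Set ℝ := {h | 0 < h ∧ h ∈ P} with hQdef
  have hQne : Q.Nonempty := ⟨p, hp, hPp⟩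
  have hQbdd : BddBelow Q := ⟨0, fun q hq => hq.1.le⟩
  set d : ℝ := sInf Q with hddef
  have hd0 : 0 ≤ d := le_csInf hQne fun q hq => hq.1.le
  have hdle : ∀ q ∈ Q, d ≤ q := fun q hq => csInf_le hQbdd hq
  have hsmall : ∀ δ : ℝ, 0 < δ → ∃ q ∈ Q, q < d + δ := by
    intro δ hδ
    exact exists_lt_of_csInf_lt hQne (by linarith)
  have hred : ∀ q ∈ Q, ∀ t : ℝ, 0 ≤ t → ∃ r, 0 ≤ r ∧ r < q ∧ g t = g r := by
    intro q hq t ht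
    have hq0 : 0 < q := hq.1
    set r : ℝ := Int.fract (t / q) * q with hrdef
    have hr0 : 0 ≤ r := mul_nonneg (Int.fract_nonneg _) hq0.le
    have hrq : r < q := by
      have h1 : Int.fract (t / q) * q < 1 * q :=
        mul_lt_mul_of_pos_right (Int.fract_lt_one (t / q)) hq0
      rw [one_mul] at h1
      exact h1
    have hfl : (0:ℤ) ≤ ⌊t / q⌋ := Int.floor_nonneg.mpr (div_nonneg ht hq0.le)
    set k : ℕ := ⌊t / q⌋.toNat with hkdef
    have hkk : (k : ℝ) = ((⌊t / q⌋ : ℤ) : ℝ) := by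
      rw [hkdef]
      exact_mod_cast congrArg (fun z : ℤ => (z : ℝ)) (Int.toNat_of_nonneg hfl)
    have ht' : t = r + k * q := by
      rw [hrdef, hkk, Int.fract]
      have hqq : q ≠ 0 := ne_of_gt hq0
      field_simp
      ring
    refine ⟨r, hr0, hrq, ?_⟩
    rw [ht']
    exact hmul q hq.2 k r hr0
  rcases eq_or_lt_of_le hd0 with hdz | hdpos
  · -- d = 0 : periods accumulate at 0, so g is constant; contradiction
    apply hne
    apply eq_of_forall_dist_le
    intro ε hε
    have hc0 : ContinuousWithinAt g (Set.Ici 0) 0 := gc 0 (Set.self_mem_Ici)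
    rw [Metric.continuousWithinAt_iff] at hc0
    obtain ⟨δ, hδ0, hδ⟩ := hc0 ε hε
    obtain ⟨q, hq, hqδ⟩ := hsmall δ hδ0
    obtain ⟨r, hr0, hrq, hgr⟩ := hred q hq t0 ht0
    have hrδ : dist r 0 < δ := by
      rw [Real.dist_eq, sub_zero, abs_of_nonneg hr0]
      linarith [hdle q hq]
    have := hδ (show r ∈ Set.Ici 0 from hr0) hrδ
    rw [hgr]
    exact this.le
  · -- d > 0 : d is a minimal positive period; derive a contradiction
    have hdP : d ∈ P := by
      refine ⟨hd0, fun t ht => ?_⟩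
      apply eq_of_forall_dist_le
      intro ε hε
      have hct : ContinuousWithinAt g (Set.Ici 0) (t + d) := gc _ (Set.mem_Ici.mpr (by linarith))
      rw [Metric.continuousWithinAt_iff] at hct
      obtain ⟨δ, hδ0, hδ⟩ := hct ε hε
      obtain ⟨q, hq, hqd⟩ := hsmall δ hδ0
      have hdq : d ≤ q := hdle q hq
      have h1 : dist (t + q) (t + d) < δ := by
        rw [Real.dist_eq, show t + q - (t + d) = q - d by ring, abs_of_nonneg (by linarith)]
        linarith
      have h2 := hδ (show t + q ∈ Set.Ici 0 by simp [Set.mem_Ici]; linarith [hq.1]) h1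
      have h3 : g (t + q) = g t := hq.2.2 t ht
      rw [h3] at h2
      rw [dist_comm] at h2
      exact h2.le
    have hsub0 : Set.Icc (0:ℝ) d ⊆ Set.Ici 0 := fun y hy => hy.1
    obtain ⟨m, hm, hmax⟩ :=
      isCompact_Icc.exists_isMaxOn (Set.nonempty_Icc.mpr hd0) (gc.mono hsub0)
    have hm0 : 0 ≤ m := hm.1
    have hmaxOn : ∀ y ∈ Set.Icc (0:ℝ) d, g y ≤ g m := fun y hy => hmax hy
    have hB : ∀ t : ℝ, 0 ≤ t → g t ≤ g m := by
      intro t ht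
      obtain ⟨r, hr0, hrd, hgr⟩ := hred d ⟨hdpos, hdP⟩ t ht
      rw [hgr]
      exact hmaxOn r ⟨hr0, hrd.le⟩
    have hu : ∃ u, m < u ∧ u < m + d ∧ g u < g m := by
      by_contra hcon
      push_neg at hcon
      have h1 : g (m + d / 2) = g m :=
        le_antisymm (hB _ (by linarith)) (hcon _ (by linarith) (by linarith))
      have h2 : (m + d / 2) - m ∈ P := gap m (m + d / 2) hm0 (by linarith) h1.symm
      have h3 : d ≤ (m + d / 2) - m := hdle _ ⟨by linarith, h2⟩
      linarith
    obtain ⟨u, hmu, hud, hgu⟩ := hu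
    set c : ℝ := (g u + g m) / 2 with hcdef
    have hc1 : g u < c := by rw [hcdef]; linarith
    have hc2 : c < g m := by rw [hcdef]; linarith
    have hgmd : g (m + d) = g m := hdP.2 m hm0
    have hcont1 : ContinuousOn g (Set.Icc m u) := gc.mono fun y hy => le_trans hm0 hy.1
    have hcont2 : ContinuousOn g (Set.Icc u (m + d)) :=
      gc.mono fun y hy => le_trans (by linarith : (0:ℝ) ≤ u) hy.1
    obtain ⟨t1, ht1, hgt1⟩ := intermediate_value_Icc' hmu.le hcont1
      (show c ∈ Set.Icc (g u) (g m) from ⟨hc1.le, hc2.le⟩)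
    obtain ⟨t2, ht2, hgt2⟩ := intermediate_value_Icc hud.le hcont2
      (show c ∈ Set.Icc (g u) (g (m + d)) from ⟨hc1.le, by rw [hgmd]; exact hc2.le⟩)
    have h1 : m < t1 := lt_of_le_of_ne ht1.1 fun e => hc2.ne' (by rw [e]; exact hgt1)
    have h2 : t1 < u := lt_of_le_of_ne ht1.2 fun e => hc1.ne (by rw [← e]; exact hgt1)
    have h3 : u < t2 := lt_of_le_of_ne ht2.1 fun e => hc1.ne (by rw [e]; exact hgt2)
    have h4 : t2 < m + d := lt_of_le_of_ne ht2.2 fun e => hc2.ne' (by rw [← hgmd, ← e]; exact hgt2)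
    have hgap : t2 - t1 ∈ P := gap t1 t2 (le_trans hm0 ht1.1) (by linarith) (hgt1.trans hgt2.symm)
    have h5 : d ≤ t2 - t1 := hdle _ ⟨by linarith, hgap⟩
    linarith

/-- If the path through `x` revisits a value, it is constant from then on. -/
lemma aux_repeat_const {X : ℝ → ℝ → ℝ}
    (hflow : ∀ x y s t : ℝ, 0 ≤ s → 0 ≤ t → X x s = X y t →
      ∀ h : ℝ, 0 ≤ h → X x (s + h) = X y (t + h))
    (hcont : ∀ x : ℝ, ContinuousOn (fun t : ℝ => X x t) (Set.Ici 0))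
    {x s t : ℝ} (hs : 0 ≤ s) (hst : s < t) (heq : X x s = X x t) :
    ∀ h : ℝ, 0 ≤ h → X x (s + h) = X x s := by
  have ht : 0 ≤ t := hs.trans hst.le
  set g : ℝ → ℝ := fun h => X x (s + h) with hgdef
  have gc : ContinuousOn g (Set.Ici 0) := by
    apply (hcont x).comp (Continuous.continuousOn (by continuity))
    intro h hh
    exact add_nonneg hs hh
  have gflow : ∀ a b : ℝ, 0 ≤ a → 0 ≤ b → g a = g b → ∀ h : ℝ, 0 ≤ h → g (a + h) = g (b + h) := by
    intro a b ha hb hab h hh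
    have := hflow x x (s + a) (s + b) (add_nonneg hs ha) (add_nonneg hs hb) hab h hh
    simpa [add_assoc] using this
  have h0p : g 0 = g (t - s) := by
    show X x (s + 0) = X x (s + (t - s))
    rw [add_zero, show s + (t - s) = t by ring]
    exact heq
  have := aux_periodic_const gc gflow (by linarith : (0:ℝ) < t - s) h0p
  intro h hh
  have h2 := this h hh
  show X x (s + h) = X x s
  calc X x (s + h) = g h := rfl
  _ = g 0 := h2
  _ = X x s := by show X x (s + 0) = X x s; rw [add_zero]

/-- Classification of the paths of a one-dimensional deterministic Hunt process:
every path is strictly monotone (increasing or decreasing) up to some time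
`t₀ ∈ [0,∞]` and constant afterwards. -/
theorem deterministic_hunt_path_types
    (X : ℝ → ℝ → ℝ)
    (h0 : ∀ x : ℝ, X x 0 = x)
    (hflow : ∀ x y s t : ℝ, 0 ≤ s → 0 ≤ t → X x s = X y t →
      ∀ h : ℝ, 0 ≤ h → X x (s + h) = X y (t + h))
    (hcont : ∀ x : ℝ, ContinuousOn (fun t : ℝ => X x t) (Set.Ici 0)) :
    ∀ x : ℝ, ∃ t₀ : ℝ≥0∞,
      (StrictMonoOn (X x) {t : ℝ | 0 ≤ t ∧ ENNReal.ofReal t < t₀} ∨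
       StrictAntiOn (X x) {t : ℝ | 0 ≤ t ∧ ENNReal.ofReal t < t₀}) ∧
      (∀ s t : ℝ, 0 ≤ s → 0 ≤ t → t₀ ≤ ENNReal.ofReal s → t₀ ≤ ENNReal.ofReal t →
        X x s = X x t) := by
  intro x
  set S : Set ℝ := {s | 0 ≤ s ∧ ∀ h : ℝ, 0 ≤ h → X x (s + h) = X x s} with hSdef
  have hinj : ∀ u v : ℝ, 0 ≤ u → u < v → X x u = X x v → u ∈ S := by
    intro u v hu huv he
    exact ⟨hu, aux_repeat_const hflow hcont hu huv he⟩
  by_cases hS : S.Nonempty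
  · -- the path is eventually constant
    have hSbdd : BddBelow S := ⟨0, fun s hs => hs.1⟩
    set T : ℝ := sInf S with hTdef
    have hT0 : 0 ≤ T := le_csInf hS fun s hs => hs.1
    have hconst2 : ∀ u v : ℝ, T < u → u ≤ v → X x u = X x v := by
      intro u v hu huv
      obtain ⟨s, hsS, hsu⟩ := exists_lt_of_csInf_lt hS hu
      have h1 : X x u = X x s := by
        have := hsS.2 (u - s) (by linarith)
        rw [show s + (u - s) = u by ring] at this
        exact this
      have h2 : X x v = X x s := by
        have := hsS.2 (v - s) (by linarith)
        rw [show s + (v - s) = v by ring] at this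
        exact this
      rw [h1, h2]
    have hTval : ∀ v : ℝ, T < v → X x T = X x v := by
      intro v hv
      apply eq_of_forall_dist_le
      intro ε hε
      have hct : ContinuousWithinAt (fun t : ℝ => X x t) (Set.Ici 0) T := hcont x T hT0
      rw [Metric.continuousWithinAt_iff] at hct
      obtain ⟨δ, hδ0, hδ⟩ := hct ε hε
      set r : ℝ := min v (T + δ / 2) with hrdef
      have hTr : T < r := lt_min hv (by linarith)
      have hr0 : (0:ℝ) ≤ r := le_trans hT0 hTr.le
      have hrd : dist r T < δ := by
        rw [Real.dist_eq, abs_of_nonneg (by linarith : (0:ℝ) ≤ r - T)]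
        have : r ≤ T + δ / 2 := min_le_right _ _
        linarith
      have h1 := hδ (show r ∈ Set.Ici 0 from hr0) hrd
      have h2 : X x r = X x v := hconst2 r v hTr (min_le_left _ _)
      rw [h2] at h1
      rw [dist_comm]
      exact h1.le
    have hall : ∀ s t : ℝ, T ≤ s → T ≤ t → X x s = X x t := by
      intro s t hs ht
      have e1 : X x T = X x s := by
        rcases eq_or_lt_of_le hs with h | h
        · rw [← h]
        · exact hTval s h
      have e2 : X x T = X x t := by
        rcases eq_or_lt_of_le ht with h | h
        · rw [← h]
        · exact hTval t h
      rw [← e1, ← e2]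
    refine ⟨ENNReal.ofReal T, ?_, ?_⟩
    · have hsub : {t : ℝ | 0 ≤ t ∧ ENNReal.ofReal t < ENNReal.ofReal T} ⊆ Set.Ico 0 T := by
        intro t ht
        refine ⟨ht.1, ?_⟩
        by_contra hcon
        push_neg at hcon
        exact absurd (ENNReal.ofReal_le_ofReal hcon) (not_le.mpr ht.2)
      have hinjOn : Set.InjOn (X x) (Set.Ico 0 T) := by
        intro u hu v hv he
        by_contra hne
        rcases lt_or_gt_of_ne hne with h | h
        · have := csInf_le hSbdd (hinj u v hu.1 h he)
          exact absurd hu.2 (not_lt.mpr this)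
        · have := csInf_le hSbdd (hinj v u hv.1 h he.symm)
          exact absurd hv.2 (not_lt.mpr this)
      have hcOn : ContinuousOn (X x) (Set.Ico 0 T) :=
        (hcont x).mono fun y hy => hy.1
      rcases aux_mono_or_anti Set.ordConnected_Ico hcOn hinjOn with h | h
      · exact Or.inl (h.mono hsub)
      · exact Or.inr (h.mono hsub)
    · intro s t hs0 ht0 hles hlet
      rw [ENNReal.ofReal_le_ofReal_iff hs0] at hles
      rw [ENNReal.ofReal_le_ofReal_iff ht0] at hlet
      exact hall s t hles hlet
  · -- the path is injective, hence strictly monotone, forever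
    refine ⟨⊤, ?_, ?_⟩
    · have hsub : {t : ℝ | 0 ≤ t ∧ ENNReal.ofReal t < (⊤ : ℝ≥0∞)} ⊆ Set.Ici 0 :=
        fun t ht => ht.1
      have hinjOn : Set.InjOn (X x) (Set.Ici 0) := by
        intro u hu v hv he
        by_contra hne
        rcases lt_or_gt_of_ne hne with h | h
        · exact hS ⟨u, hinj u v hu h he⟩
        · exact hS ⟨v, hinj v u hv h he.symm⟩
      rcases aux_mono_or_anti Set.ordConnected_Ici (hcont x) hinjOn with h | h
      · exact Or.inl (h.mono hsub)
      · exact Or.inr (h.mono hsub)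
    · intro s t hs0 ht0 hles hlet
      exact absurd hles (by simp)
end

section
/- Every one-dimensional deterministic Hunt process is a semimartingale: if X is a deterministic Markov family on ℝ all of whose paths t ↦ X x t are continuous on [0,∞), then for every x ∈ ℝ the path t ↦ X x t has bounded variation on every compact interval [a,b] ⊆ [0,∞) (equivalently, it is locally of bounded variation on [0,∞)). -/
open Set

/-- Core lemma: a continuous (on `[0,∞)`) function with the semiflow shift property
cannot have a strict "peak" pattern `f a < f b > f c` with `0 ≤ a < b < c`. -/
lemma no_peak_aux (f : ℝ → ℝ) (hc : ContinuousOn f (Set.Ici 0))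
    (P : ∀ s t : ℝ, 0 ≤ s → 0 ≤ t → f s = f t → ∀ h : ℝ, 0 ≤ h → f (s + h) = f (t + h))
    {a b c : ℝ} (ha : 0 ≤ a) (hab : a < b) (hbc : b < c)
    (h1 : f a < f b) (h2 : f c < f b) : False := by
  have hb : (0:ℝ) ≤ b := le_trans ha hab.le
  have hcc : (0:ℝ) ≤ c := le_trans hb hbc.le
  set v : ℝ := (max (f a) (f c) + f b) / 2 with hv
  have hmaxlt : max (f a) (f c) < f b := max_lt h1 h2
  have hv1 : max (f a) (f c) < v := by rw [hv]; linarith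
  have hv2 : v < f b := by rw [hv]; linarith
  have hfa : f a < v := lt_of_le_of_lt (le_max_left _ _) hv1
  have hfc : f c < v := lt_of_le_of_lt (le_max_right _ _) hv1
  have hcab : ContinuousOn f (Icc a b) := hc.mono (fun t ht => le_trans ha ht.1)
  have hcbc : ContinuousOn f (Icc b c) := hc.mono (fun t ht => le_trans hb ht.1)
  -- the set of times in [a,b] where f = v
  set A : Set ℝ := Icc a b ∩ f ⁻¹' {v} with hA
  have hAne : A.Nonempty := by
    have := intermediate_value_Icc hab.le hcab
    obtain ⟨t0, ht0, hft0⟩ := this ⟨hfa.le, hv2.le⟩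
    exact ⟨t0, ht0, hft0⟩
  have hAclosed : IsClosed A := hcab.preimage_isClosed_of_isClosed isClosed_Icc isClosed_singleton
  have hAcomp : IsCompact A := isCompact_Icc.of_isClosed_subset hAclosed inter_subset_left
  set a' : ℝ := sSup A with ha'
  have ha'A : a' ∈ A := hAcomp.sSup_mem hAne
  have ha'I : a' ∈ Icc a b := ha'A.1
  have hfa' : f a' = v := ha'A.2
  have ha'0 : (0:ℝ) ≤ a' := le_trans ha ha'I.1
  have ha'b : a' < b := lt_of_le_of_ne ha'I.2 (fun h => by rw [h] at hfa'; exact absurd hfa' hv2.ne')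
  have hAbdd : BddAbove A := hAcomp.bddAbove
  -- f > v on (a', b]
  have h_gt_ab : ∀ t, a' < t → t ≤ b → v < f t := by
    intro t ht1 ht2
    by_contra hle
    push_neg at hle
    have htab : t ∈ Icc a b := ⟨le_trans ha'I.1 ht1.le, ht2⟩
    obtain ⟨t', ht', hft'⟩ := intermediate_value_Icc ht2 (hcab.mono (fun u hu => ⟨le_trans htab.1 hu.1, hu.2⟩)) ⟨hle, hv2.le⟩
    have : t' ∈ A := ⟨⟨le_trans htab.1 ht'.1, ht'.2⟩, hft'⟩
    have : t' ≤ a' := le_csSup hAbdd this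
    linarith [ht'.1]
  -- the set of times in [b,c] where f = v
  set B : Set ℝ := Icc b c ∩ f ⁻¹' {v} with hB
  have hBne : B.Nonempty := by
    obtain ⟨t0, ht0, hft0⟩ := intermediate_value_Icc' hbc.le hcbc ⟨hfc.le, hv2.le⟩
    exact ⟨t0, ht0, hft0⟩
  have hBclosed : IsClosed B := hcbc.preimage_isClosed_of_isClosed isClosed_Icc isClosed_singleton
  have hBcomp : IsCompact B := isCompact_Icc.of_isClosed_subset hBclosed inter_subset_left
  set b' : ℝ := sInf B with hb'
  have hb'B : b' ∈ B := hBcomp.sInf_mem hBne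
  have hb'I : b' ∈ Icc b c := hb'B.1
  have hfb' : f b' = v := hb'B.2
  have hbb' : b < b' := lt_of_le_of_ne hb'I.1 (fun h => by rw [← h] at hfb'; exact absurd hfb' hv2.ne')
  have hBbdd : BddBelow B := hBcomp.bddBelow
  -- f > v on [b, b')
  have h_gt_bb' : ∀ t, b ≤ t → t < b' → v < f t := by
    intro t ht1 ht2
    by_contra hle
    push_neg at hle
    have htbc : t ∈ Icc b c := ⟨ht1, le_trans ht2.le hb'I.2⟩
    obtain ⟨t', ht', hft'⟩ := intermediate_value_Icc' ht1 (hcbc.mono (fun u hu => ⟨hu.1, le_trans hu.2 htbc.2⟩)) ⟨hle, hv2.le⟩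
    have : t' ∈ B := ⟨⟨ht'.1, le_trans ht'.2 htbc.2⟩, hft'⟩
    have : b' ≤ t' := csInf_le hBbdd this
    linarith [ht'.2]
  -- f ≥ v on [a', b']
  have hge : ∀ t, a' ≤ t → t ≤ b' → v ≤ f t := by
    intro t ht1 ht2
    rcases le_total t b with h | h
    · rcases eq_or_lt_of_le ht1 with h' | h'
      · rw [← h', hfa']
      · exact (h_gt_ab t h' h).le
    · rcases eq_or_lt_of_le ht2 with h' | h'
      · rw [h', hfb']
      · exact (h_gt_bb' t h h').le
  set p : ℝ := b' - a' with hp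
  have hp0 : 0 < p := by
    have : a' < b' := lt_trans ha'b hbb'
    simp [hp]; linarith
  have hper : ∀ h : ℝ, 0 ≤ h → f (a' + h) = f (b' + h) :=
    P a' b' ha'0 (le_trans hb hb'I.1) (hfa'.trans hfb'.symm)
  -- the set of shifts where f dips below v
  set S : Set ℝ := {h : ℝ | 0 ≤ h ∧ f (a' + h) < v} with hS
  have hSp : ∀ h ∈ S, p < h := by
    intro h hh
    by_contra hle
    push_neg at hle
    have : v ≤ f (a' + h) := hge _ (by linarith [hh.1]) (by simp [hp] at hle ⊢; linarith)
    linarith [hh.2]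
  have hSne : S.Nonempty := by
    refine ⟨c - a', ?_, ?_⟩
    · linarith [le_trans ha'I.2 hbc.le]
    · simpa using hfc
  have hSbdd : BddBelow S := ⟨0, fun h hh => hh.1⟩
  set h0 : ℝ := sInf S with hh0
  have hh0p : p ≤ h0 := le_csInf hSne (fun h hh => (hSp h hh).le)
  obtain ⟨h1, hh1S, hh1lt⟩ := exists_lt_of_csInf_lt hSne (show h0 < h0 + p by linarith)
  have hh1p : p < h1 := hSp h1 hh1S
  have hnew : f (a' + (h1 - p)) = f (a' + h1) := by
    have := hper (h1 - p) (by linarith)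
    rw [this]
    congr 1; rw [hp]; ring
  have hmem : h1 - p ∈ S := ⟨by linarith, by rw [hnew]; exact hh1S.2⟩
  have : h0 ≤ h1 - p := csInf_le hSbdd hmem
  linarith

/-- A continuous semiflow path on `[0,∞)` is monotone or antitone. -/
lemma path_mono_or_anti (f : ℝ → ℝ) (hc : ContinuousOn f (Set.Ici 0))
    (P : ∀ s t : ℝ, 0 ≤ s → 0 ≤ t → f s = f t → ∀ h : ℝ, 0 ≤ h → f (s + h) = f (t + h)) :
    MonotoneOn f (Set.Ici 0) ∨ AntitoneOn f (Set.Ici 0) := by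
  by_contra hcon
  push_neg at hcon
  obtain ⟨a, haI, b, hbI, c, hcI, hab, hbc, hpat⟩ :=
    (Set.not_monotoneOn_not_antitoneOn_iff_exists_lt_lt).mp hcon
  rcases hpat with ⟨h1, h2⟩ | ⟨h1, h2⟩
  · exact no_peak_aux f hc P haI hab hbc h1 h2
  · refine no_peak_aux (fun t => -f t) hc.neg ?_ haI hab hbc (by simpa) (by simpa)
    intro s t hs ht heq h hh
    have : f s = f t := by simpa using heq
    simp [P s t hs ht this h hh]

/-- Every one-dimensional deterministic Hunt process is a semimartingale: all of
its paths are of bounded variation on compact subintervals of `[0,∞)`. -/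
theorem deterministic_hunt_is_semimartingale
    (X : ℝ → ℝ → ℝ)
    (h0 : ∀ x : ℝ, X x 0 = x)
    (hflow : ∀ x y s t : ℝ, 0 ≤ s → 0 ≤ t → X x s = X y t →
      ∀ h : ℝ, 0 ≤ h → X x (s + h) = X y (t + h))
    (hcont : ∀ x : ℝ, ContinuousOn (fun t : ℝ => X x t) (Set.Ici 0)) :
    ∀ x a b : ℝ, 0 ≤ a → a ≤ b → BoundedVariationOn (X x) (Set.Icc a b) := by
  intro x a b ha hab
  have hsub : Set.Icc a b ⊆ Set.Ici 0 := fun t ht => le_trans ha ht.1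
  have key := path_mono_or_anti (X x) (hcont x) (fun s t hs ht => hflow x x s t hs ht)
  have hmem_a : a ∈ Set.Icc a b := ⟨le_refl a, hab⟩
  have hmem_b : b ∈ Set.Icc a b := ⟨hab, le_refl b⟩
  rcases key with hm | hm
  · have hm' : MonotoneOn (X x) (Set.Icc a b) := hm.mono hsub
    have := hm'.eVariationOn_le hmem_a hmem_b
    rw [Set.inter_self] at this
    exact (this.trans_lt ENNReal.ofReal_lt_top).ne
  · have hm' : MonotoneOn (fun t => -(X x t)) (Set.Icc a b) :=
      fun s hs t ht hst => neg_le_neg ((hm.mono hsub) hs ht hst)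
    have hbv : BoundedVariationOn (fun t => -(X x t)) (Set.Icc a b) := by
      have := hm'.eVariationOn_le hmem_a hmem_b
      rw [Set.inter_self] at this
      exact (this.trans_lt ENNReal.ofReal_lt_top).ne
    have hlip : LipschitzWith 1 (fun y : ℝ => -y) := LipschitzWith.id.neg
    have h2 := hlip.comp_boundedVariationOn hbv
    have heq : ((fun y : ℝ => -y) ∘ fun t => -(X x t)) = X x := by
      funext t; simp
    rwa [heq] at h2
end

section
/- Let X be a deterministic Markov family on ℝ and let x₀ ∈ ℝ be such that the path t ↦ X x₀ t is continuous on [0,∞) and tends to +∞ as t → ∞. Then for every x ≥ x₀ there exists s ≥ 0 with X x₀ s = x, and for any such s one has X x t = X x₀ (s + t) for all t ≥ 0; that is, every path starting in [x₀, ∞) is a time shift of the generating path t ↦ X x₀ t. -/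
open Filter

/-- On a ⊕-domain, every path starting above `x₀` is a time shift of the
generating path `t ↦ X x₀ t`. -/
theorem deterministic_markov_shift_of_generating_path
    (X : ℝ → ℝ → ℝ)
    (h0 : ∀ x : ℝ, X x 0 = x)
    (hflow : ∀ x y s t : ℝ, 0 ≤ s → 0 ≤ t → X x s = X y t →
      ∀ h : ℝ, 0 ≤ h → X x (s + h) = X y (t + h))
    (x₀ : ℝ)
    (hcont : ContinuousOn (fun t : ℝ => X x₀ t) (Set.Ici 0))
    (htop : Tendsto (fun t : ℝ => X x₀ t) atTop atTop) :
    ∀ x : ℝ, x₀ ≤ x →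
      (∃ s : ℝ, 0 ≤ s ∧ X x₀ s = x) ∧
      (∀ s : ℝ, 0 ≤ s → X x₀ s = x → ∀ t : ℝ, 0 ≤ t → X x t = X x₀ (s + t)) := by
  intro x hx
  constructor
  · obtain ⟨T, hT⟩ := (htop.eventually_ge_atTop x).and (eventually_ge_atTop 0) |>.exists
    obtain ⟨hTx, hT0⟩ := hT
    have h01 : (0 : ℝ) ≤ T := hT0
    have hsub : Set.Icc (0 : ℝ) T ⊆ Set.Ici 0 := Set.Icc_subset_Ici_self
    have := intermediate_value_Icc h01 (hcont.mono hsub)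
    have hmem : x ∈ Set.Icc (X x₀ 0) (X x₀ T) := by
      constructor
      · rw [h0]; exact hx
      · exact hTx
    obtain ⟨s, hs, hsx⟩ := this hmem
    exact ⟨s, hs.1, hsx⟩
  · intro s hs hsx t ht
    have := hflow x₀ x s 0 hs le_rfl (by rw [h0]; exact hsx) t ht
    rw [zero_add] at this
    exact this.symm
end

section
/- The Cantor process is not an Itô process: let h : ℝ → ℝ be monotone nondecreasing and continuous with h(0) = 0 and h(1) = 1, and suppose h has derivative 0 at Lebesgue-almost every point of [0,1] (as the Cantor function does). Define g(y) := (h(y) + y)/2. Then there is no measurable function ℓ : ℝ → ℝ such that s ↦ ℓ(g(s)) is Lebesgue integrable on [0,1] and g(t) = ∫₀ᵗ ℓ(g(s)) ds for all t ∈ [0,1]. In particular, h admits no Lebesgue density: there is no integrable f : [0,1] → ℝ with h(t) = ∫₀ᵗ f(s) ds for all t ∈ [0,1]. -/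
open MeasureTheory Set Filter intervalIntegral
open scoped Topology

lemma no_density_aux (h : ℝ → ℝ)
    (h0 : h 0 = 0) (h1 : h 1 = 1)
    (hderiv : ∀ᵐ t ∂(volume.restrict (Set.Icc (0:ℝ) 1)), HasDerivAt h 0 t) :
    ¬ ∃ f : ℝ → ℝ, IntegrableOn f (Set.Icc 0 1) ∧
        ∀ t ∈ Set.Icc (0:ℝ) 1, h t = ∫ s in (0:ℝ)..t, f s := by
  rintro ⟨f, hfi, hf⟩
  set F : ℝ → ℝ := (Set.Icc (0:ℝ) 1).indicator f with hF
  have hFi : Integrable F := hfi.integrable_indicator measurableSet_Icc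
  have hFloc : LocallyIntegrable F := hFi.locallyIntegrable
  -- interval integrability of f on subintervals of [0,1]
  have hint : ∀ x ∈ Set.Icc (0:ℝ) 1, ∀ y ∈ Set.Icc (0:ℝ) 1, x ≤ y →
      IntervalIntegrable f volume x y := by
    intro x hx y hy hxy
    rw [intervalIntegrable_iff_integrableOn_Ioc_of_le hxy]
    exact hfi.mono_set ((Set.Ioc_subset_Icc_self).trans (Set.Icc_subset_Icc hx.1 hy.2))
  -- Lebesgue differentiation
  have hLeb := (IsUnifLocDoublingMeasure.vitaliFamily (volume : Measure ℝ) 1).ae_tendsto_average hFloc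
  -- combine a.e. statements on Ioo 0 1
  have hzero : ∀ᵐ x ∂(volume.restrict (Set.Ioo (0:ℝ) 1)), f x = 0 := by
    have h1' : ∀ᵐ x ∂(volume.restrict (Set.Ioo (0:ℝ) 1)), HasDerivAt h 0 x :=
      ae_mono (Measure.restrict_mono Set.Ioo_subset_Icc_self le_rfl) hderiv
    have h2' : ∀ᵐ x ∂(volume.restrict (Set.Ioo (0:ℝ) 1)),
        Tendsto (fun a => ⨍ y in a, F y) ((IsUnifLocDoublingMeasure.vitaliFamily (volume : Measure ℝ) 1).filterAt x) (𝓝 (F x)) :=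
      ae_restrict_of_ae hLeb
    filter_upwards [h1', h2', ae_restrict_mem measurableSet_Ioo] with x hdx havg hxmem
    -- averages over Icc x y tend to F x as y → x⁺
    have havg' : Tendsto (fun y => ⨍ z in Set.Icc x y, F z) (𝓝[>] x) (𝓝 (F x)) :=
      havg.comp (Real.tendsto_Icc_vitaliFamily_right x)
    -- slope tends to 0
    have hslope : Tendsto (slope h x) (𝓝[>] x) (𝓝 0) :=
      (hasDerivAt_iff_tendsto_slope.1 hdx).mono_left (nhdsWithin_mono x fun y hy => ne_of_gt hy)
    -- eventually the average equals the slope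
    have hev : ∀ᶠ y in 𝓝[>] x, (⨍ z in Set.Icc x y, F z) = slope h x y := by
      have hx1 : x < 1 := hxmem.2
      have : Set.Ioc x 1 ∈ 𝓝[>] x := Ioc_mem_nhdsGT_of_mem ⟨le_rfl, hx1⟩
      filter_upwards [this] with y hy
      have hxy : x < y := hy.1
      have hxI : x ∈ Set.Icc (0:ℝ) 1 := ⟨hxmem.1.le, hx1.le⟩
      have hyI : y ∈ Set.Icc (0:ℝ) 1 := ⟨hxmem.1.le.trans hxy.le, hy.2⟩
      have hsub : Set.Icc x y ⊆ Set.Icc (0:ℝ) 1 := Set.Icc_subset_Icc hxI.1 hyI.2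
      have hIcc : ∫ z in Set.Icc x y, F z = h y - h x := by
        rw [hF, setIntegral_indicator measurableSet_Icc, Set.inter_eq_left.2 hsub,
          integral_Icc_eq_integral_Ioc, ← intervalIntegral.integral_of_le hxy.le,
          ← intervalIntegral.integral_interval_sub_left (hint 0 ⟨le_rfl, zero_le_one⟩ y hyI hyI.1)
            (hint 0 ⟨le_rfl, zero_le_one⟩ x hxI hxI.1), ← hf y hyI, ← hf x hxI]
      rw [setAverage_eq, hIcc, measureReal_def, Real.volume_Icc, ENNReal.toReal_ofReal (by linarith), slope_def_field]
      simp [div_eq_inv_mul]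
    have : Tendsto (fun y => ⨍ z in Set.Icc x y, F z) (𝓝[>] x) (𝓝 0) :=
      hslope.congr' (hev.mono fun y hy => hy.symm)
    have hFx : F x = 0 := tendsto_nhds_unique havg' this
    rwa [hF, Set.indicator_of_mem (Set.Ioo_subset_Icc_self hxmem)] at hFx
  -- conclude: ∫ 0..1 f = 0 but h 1 = 1
  have : (1:ℝ) = 0 := by
    have e1 : h 1 = ∫ s in (0:ℝ)..1, f s := hf 1 ⟨zero_le_one, le_rfl⟩
    rw [h1, intervalIntegral.integral_of_le zero_le_one,
      integral_Ioc_eq_integral_Ioo] at e1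
    rw [e1]
    exact integral_eq_zero_of_ae hzero
  norm_num at this
/-- The Cantor process is not an Itô process: with `h` the Cantor function (any
nondecreasing continuous function with `h 0 = 0`, `h 1 = 1` and derivative `0`
a.e. on `[0,1]`) and `g (y) = (h (y) + y) / 2` the generating path, there is no
measurable `ℓ` with `g (t) = ∫₀ᵗ ℓ (g (s)) ds` on `[0,1]`; in particular `h`
admits no Lebesgue density. -/
theorem cantor_process_not_ito
    (h : ℝ → ℝ) (hmono : Monotone h) (hcont : Continuous h)
    (h0 : h 0 = 0) (h1 : h 1 = 1)
    (hderiv : ∀ᵐ t ∂(volume.restrict (Set.Icc (0:ℝ) 1)), HasDerivAt h 0 t)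
    (g : ℝ → ℝ) (hg : ∀ y : ℝ, g y = (h y + y) / 2) :
    (¬ ∃ ℓ : ℝ → ℝ, Measurable ℓ ∧
        IntegrableOn (fun s : ℝ => ℓ (g s)) (Set.Icc 0 1) ∧
        ∀ t ∈ Set.Icc (0:ℝ) 1, g t = ∫ s in (0:ℝ)..t, ℓ (g s)) ∧
    (¬ ∃ f : ℝ → ℝ, IntegrableOn f (Set.Icc 0 1) ∧
        ∀ t ∈ Set.Icc (0:ℝ) 1, h t = ∫ s in (0:ℝ)..t, f s) := by
  have key := no_density_aux h h0 h1 hderiv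
  refine ⟨?_, key⟩
  rintro ⟨ℓ, -, hℓi, hℓ⟩
  refine key ⟨fun s => 2 * ℓ (g s) - 1, ?_, ?_⟩
  · exact ((hℓi.const_mul 2).sub (integrableOn_const (by simp)))
  · intro t ht
    have hti : IntervalIntegrable (fun s => ℓ (g s)) volume 0 t := by
      rw [intervalIntegrable_iff_integrableOn_Ioc_of_le ht.1]
      exact hℓi.mono_set (Set.Ioc_subset_Icc_self.trans (Set.Icc_subset_Icc le_rfl ht.2))
    rw [intervalIntegral.integral_sub ((hti.const_mul 2)) intervalIntegrable_const,
      intervalIntegral.integral_const_mul, ← hℓ t ht, integral_one, hg t]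
    ring
end

section
/- Let Φ : ℝ → ℝ be given by Φ(y) = y/2 for y < 0 and Φ(y) = y for y ≥ 0, so that Φ⁻¹(z) = 2z for z < 0 and Φ⁻¹(z) = z for z ≥ 0, and define X x t := Φ(t + Φ⁻¹(x)) for x ∈ ℝ, t ≥ 0. Let b : ℝ → ℝ be given by b(y) = 1/2 for y < 0 and b(y) = 1 for y ≥ 0. Then for every x ∈ ℝ and t ≥ 0, X x t − x = ∫₀ᵗ b(X x s) ds; i.e. the process is an Itô process with first characteristic B_t = ∫₀ᵗ b(X_s) ds. -/
open MeasureTheory intervalIntegral Set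

private lemma ae_ne_point (m : ℝ) : ∀ᵐ s : ℝ, s ≠ m := by
  rw [MeasureTheory.ae_iff]
  simpa using Real.volume_singleton (a := m)

private lemma step_integrable (m c d : ℝ) :
    IntervalIntegrable (fun s => if s < m then (1:ℝ)/2 else 1) volume c d := by
  apply Monotone.intervalIntegrable
  intro s s' hss'
  dsimp only
  by_cases h : s' < m
  · rw [if_pos h, if_pos (lt_of_le_of_lt hss' h)]
  · rw [if_neg h]
    split <;> norm_num

private lemma step_const (c d m : ℝ) (hcd : c ≤ d) (hdm : d ≤ m) :
    ∫ s in c..d, (if s < m then (1:ℝ)/2 else 1) = (d - c)/2 := by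
  rw [intervalIntegral.integral_congr_ae (g := fun _ => (1:ℝ)/2) ?_]
  · rw [intervalIntegral.integral_const]; simp; ring
  · filter_upwards [ae_ne_point m] with s hs hmem
    rw [Set.uIoc_of_le hcd] at hmem
    rw [if_pos (lt_of_le_of_ne (le_trans hmem.2 hdm) hs)]

private lemma step_int (m t : ℝ) (hm : 0 ≤ m) (ht : 0 ≤ t) :
    ∫ s in (0:ℝ)..t, (if s < m then (1:ℝ)/2 else 1) = min t m / 2 + max (t - m) 0 := by
  rcases le_or_gt t m with h | h
  · rw [min_eq_left h, max_eq_right (by linarith), step_const 0 t m ht h]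
    ring
  · rw [min_eq_right h.le, max_eq_left (by linarith),
      ← intervalIntegral.integral_add_adjacent_intervals (b := m)
        (step_integrable m 0 m) (step_integrable m m t),
      step_const 0 m m hm le_rfl,
      intervalIntegral.integral_congr (g := fun _ => (1:ℝ))
        (fun s hs => by
          rw [Set.uIcc_of_le h.le] at hs
          exact if_neg (not_lt.2 hs.1))]
    simp

/-- The kink process: with generating path `Φ (y) = y/2` for `y < 0`, `Φ (y) = y`
for `y ≥ 0`, the deterministic process `X x t = Φ (t + Φ⁻¹ x)` is an Itô process
with first characteristic `B_t = ∫₀ᵗ b (X_s) ds`, where `b = 1/2` on `(-∞,0)` and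
`b = 1` on `[0,∞)`. -/
theorem kink_process_is_ito
    (Φ Ψ b : ℝ → ℝ)
    (hΦ : ∀ y : ℝ, Φ y = if y < 0 then y / 2 else y)
    (hΨ : ∀ z : ℝ, Ψ z = if z < 0 then 2 * z else z)
    (hb : ∀ y : ℝ, b y = if y < 0 then 1 / 2 else 1) :
    ∀ x t : ℝ, 0 ≤ t →
      Φ (t + Ψ x) - x = ∫ s in (0:ℝ)..t, b (Φ (s + Ψ x)) := by
  intro x t ht
  by_cases hx : x < 0
  · have hΨx : Ψ x = 2 * x := by rw [hΨ, if_pos hx]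
    have hint : ∀ s : ℝ, b (Φ (s + Ψ x)) = if s < -(2*x) then (1:ℝ)/2 else 1 := by
      intro s
      rw [hΨx, hΦ, hb]
      rcases lt_or_ge (s + 2*x) 0 with h | h
      · rw [if_pos h, if_pos (by linarith), if_pos (by linarith)]
      · rw [if_neg (not_lt.2 h), if_neg (not_lt.2 h), if_neg (by push_neg; linarith)]
    rw [intervalIntegral.integral_congr (g := fun s => if s < -(2*x) then (1:ℝ)/2 else 1)
      (fun s _ => hint s), step_int _ _ (by linarith) ht]
    rw [hΦ]
    rcases le_or_gt t (-(2*x)) with h | h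
    · rw [min_eq_left h, max_eq_right (by linarith)]
      rcases lt_or_eq_of_le (show t + 2*x ≤ 0 by linarith) with h' | h'
      · rw [if_pos (by linarith), hΨx]; ring
      · rw [if_neg (by rw [show t + Ψ x = 0 by rw [hΨx]; linarith]; simp)]
        rw [hΨx]; linarith
    · rw [min_eq_right h.le, max_eq_left (by linarith), hΨx,
        if_neg (by push_neg; linarith)]
      ring
  · push_neg at hx
    have hΨx : Ψ x = x := by rw [hΨ, if_neg (not_lt.2 hx)]
    have hint : ∀ s ∈ Set.uIcc (0:ℝ) t, b (Φ (s + Ψ x)) = 1 := by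
      intro s hs
      rw [Set.uIcc_of_le ht] at hs
      have h0 : (0:ℝ) ≤ s + Ψ x := by rw [hΨx]; linarith [hs.1]
      rw [hΦ, hb, if_neg (not_lt.2 h0), if_neg (not_lt.2 h0)]
    rw [intervalIntegral.integral_congr (g := fun _ => (1:ℝ)) hint,
      intervalIntegral.integral_const, hΦ, hΨx,
      if_neg (not_lt.2 (by linarith : (0:ℝ) ≤ t + x))]
    simp
end

section
/- Failure of the Feller property when the generating path has a finite left endpoint: let a ∈ ℝ and let Φ : (a, ∞) → ℝ be a strictly increasing continuous bijection onto ℝ, with inverse Φ⁻¹ : ℝ → (a, ∞). Fix t > 0. Then for every continuous u : ℝ → ℝ the function x ↦ u(Φ(t + Φ⁻¹(x))) converges to u(Φ(a + t)) as x → −∞; consequently there exists a continuous u : ℝ → ℝ vanishing at infinity such that x ↦ u(Φ(t + Φ⁻¹(x))) does not vanish at −∞, so the semigroup T_t does not map C_∞(ℝ) into itself. -/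
open Filter

/-- Failure of the Feller property when the generating path has a finite left
endpoint: if `Φ : (a,∞) → ℝ` is a strictly increasing continuous bijection onto
`ℝ` with inverse `Ψ`, then for `t > 0` one has `T_t u (x) → u (Φ (a + t))` as
`x → −∞` for every continuous `u`, and some `u ∈ C_∞(ℝ)` has `T_t u` not
vanishing at `−∞`. -/
theorem finite_left_endpoint_not_feller
    (a : ℝ) (Φ Ψ : ℝ → ℝ)
    (hΦmono : StrictMonoOn Φ (Set.Ioi a))
    (hΦcont : ContinuousOn Φ (Set.Ioi a))
    (hΦbij : Set.BijOn Φ (Set.Ioi a) Set.univ)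
    (hΨmem : ∀ x : ℝ, Ψ x ∈ Set.Ioi a)
    (hΨinv : ∀ x : ℝ, Φ (Ψ x) = x)
    (t : ℝ) (ht : 0 < t) :
    (∀ u : ℝ → ℝ, Continuous u →
      Tendsto (fun x : ℝ => u (Φ (t + Ψ x))) atBot (nhds (u (Φ (a + t))))) ∧
    ∃ u : ℝ → ℝ, Continuous u ∧ Tendsto u (cocompact ℝ) (nhds 0) ∧
      ¬ Tendsto (fun x : ℝ => u (Φ (t + Ψ x))) atBot (nhds 0) := by
  -- Step 1: Ψ tends to a at -∞.
  have hΨtendsto : Tendsto Ψ atBot (nhds a) := by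
    rw [Metric.tendsto_nhds]
    intro ε hε
    have hb : a + ε / 2 ∈ Set.Ioi a := by simp [half_pos hε]
    refine eventually_atBot.2 ⟨Φ (a + ε / 2) - 1, fun x hx => ?_⟩
    have hx' : Φ (Ψ x) < Φ (a + ε / 2) := by
      rw [hΨinv]; linarith
    have hlt : Ψ x < a + ε / 2 := by
      by_contra h
      push_neg at h
      rcases eq_or_lt_of_le h with h | h
      · rw [← h] at hx'; exact lt_irrefl _ hx'
      · exact absurd (hΦmono hb (hΨmem x) h) (not_lt.2 hx'.le)
    have hgt : a < Ψ x := hΨmem x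
    rw [Real.dist_eq, abs_lt]
    constructor <;> linarith
  -- Step 2: Φ(t + Ψ x) → Φ(a + t).
  have hmem : a + t ∈ Set.Ioi a := by simp [ht]
  have hΦat : ContinuousAt Φ (a + t) :=
    hΦcont.continuousAt (isOpen_Ioi.mem_nhds hmem)
  have hsum : Tendsto (fun x : ℝ => t + Ψ x) atBot (nhds (a + t)) := by
    have := tendsto_const_nhds.add hΨtendsto (f := fun _ : ℝ => t)
    simpa [add_comm] using this
  have hΦtend : Tendsto (fun x : ℝ => Φ (t + Ψ x)) atBot (nhds (Φ (a + t))) :=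
    hΦat.tendsto.comp hsum
  have part1 : ∀ u : ℝ → ℝ, Continuous u →
      Tendsto (fun x : ℝ => u (Φ (t + Ψ x))) atBot (nhds (u (Φ (a + t)))) :=
    fun u hu => (hu.tendsto _).comp hΦtend
  refine ⟨part1, ?_⟩
  -- Step 3: produce a counterexample u.
  set c : ℝ := Φ (a + t) with hc
  refine ⟨fun x => 1 / (1 + (x - c) ^ 2), ?_, ?_, ?_⟩
  · have h : ∀ x : ℝ, 1 + (x - c) ^ 2 ≠ 0 := fun x => by positivity
    exact continuous_const.div (by continuity) h
  · rw [cocompact_eq_atBot_atTop]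
    have key : ∀ l : Filter ℝ, Tendsto (fun x : ℝ => |x - c|) l atTop →
        Tendsto (fun x : ℝ => 1 / (1 + (x - c) ^ 2)) l (nhds 0) := by
      intro l hl
      have h2 : Tendsto (fun x : ℝ => 1 + (x - c) ^ 2) l atTop := by
        have : Tendsto (fun x : ℝ => (x - c) ^ 2) l atTop := by
          have := hl.atTop_mul_atTop₀ hl
          simpa [sq, abs_mul_abs_self] using this
        exact tendsto_atTop_add_const_left l 1 this
      simpa [one_div, Pi.inv_def] using h2.inv_tendsto_atTop
    rw [tendsto_sup]
    constructor
    · refine key _ ?_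
      have : Tendsto (fun x : ℝ => x - c) atBot atBot :=
        tendsto_atBot_add_const_right _ _ tendsto_id
      exact tendsto_abs_atBot_atTop.comp this
    · refine key _ ?_
      have : Tendsto (fun x : ℝ => x - c) atTop atTop :=
        tendsto_atTop_add_const_right _ _ tendsto_id
      exact tendsto_abs_atTop_atTop.comp this
  · intro hcontra
    have hu : Continuous fun x : ℝ => 1 / (1 + (x - c) ^ 2) := by
      have h : ∀ x : ℝ, 1 + (x - c) ^ 2 ≠ 0 := fun x => by positivity
      exact continuous_const.div (by continuity) h
    have h1 := part1 _ hu
    have := tendsto_nhds_unique h1 hcontra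
    simp at this
end
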